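/- For every d ≥ 1 and every positive integer n, the number of subgroups of ℤ^d of index n equals the sum, over all tuples (a₁, …, a_d) of positive integers with a₁·a₂⋯a_d = n, of the product a₁⁰ · a₂¹ ⋯ a_d^{d-1}. Equivalently, this counting function is the d-fold Dirichlet convolution Id⁰ * Id¹ * ⋯ * Id^{d-1} of the power functions n ↦ n^k for k = 0, …, d−1. -/

import Mathlib

/-!
Splitting `ℤ^(d+1) = ℤ × ℤ^d`, a subgroup `H` of finite index is determined by three data: the
index `a` of its image under the first projection `ℤ × ℤ^d → ℤ`, its intersection `K` with
`0 × ℤ^d`, and the class modulo `K` of any `v` with `(a, v) ∈ H`; namely `H = (0 × K) + ℤ (a, v)`.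
Since `[ℤ^(d+1) : H] = a · [ℤ^d : K]` and there are `[ℤ^d : K]` choices for the class of `v`,
the counting function satisfies `c_{d+1}(n) = ∑_{a m = n} m · c_d(m)`. Writing a factorization of
`n` into `d + 1` factors as `n = a · (a₁ ⋯ a_d)`, the sums `∑ ∏ aᵢ^(i-1)` satisfy the same
recursion, and by unfolding the Dirichlet product they are the values of `Id⁰ * ⋯ * Id^(d-1)`.
-/

namespace Nat

open Finset

theorem sum_finMulAntidiag_succ {M : Type*} [AddCommMonoid M] (d n : ℕ)
    (g : (Fin (d + 1) → ℕ) → M) :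
    ∑ a ∈ finMulAntidiag (d + 1) n, g a =
      ∑ p ∈ n.divisorsAntidiagonal, ∑ a ∈ finMulAntidiag d p.2, g (Fin.cons p.1 a) := by
  rw [sum_sigma']
  refine sum_nbij' (fun a : Fin (d + 1) → ℕ => ⟨(a 0, ∏ i, a (Fin.succ i)), Fin.tail a⟩)
    (fun q : (_ : ℕ × ℕ) × (Fin d → ℕ) => (Fin.cons q.1.1 q.2 : Fin (d + 1) → ℕ)) ?_ ?_ ?_ ?_ ?_
  · intro a ha
    simp only [mem_sigma, mem_divisorsAntidiagonal, mem_finMulAntidiag,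
      Fin.prod_univ_succ] at ha ⊢
    exact ⟨ha, by simp [Fin.tail], right_ne_zero_of_mul (ha.1 ▸ ha.2)⟩
  · rintro ⟨⟨x, y⟩, a⟩ h
    simp_all [Fin.prod_univ_succ]
  · intro a _; simp
  · rintro ⟨⟨x, y⟩, a⟩ h
    simp_all
  · intro a _; simp

theorem sum_finMulAntidiag_prod_pow_succ (d n : ℕ) :
    ∑ a ∈ finMulAntidiag (d + 1) n, ∏ i : Fin (d + 1), a i ^ (i : ℕ) =
      ∑ p ∈ n.divisorsAntidiagonal,
        p.2 * ∑ a ∈ finMulAntidiag d p.2, ∏ i : Fin d, a i ^ (i : ℕ) := by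
  rw [sum_finMulAntidiag_succ]
  refine sum_congr rfl fun p _ => ?_
  rw [mul_sum]
  refine sum_congr rfl fun a ha => ?_
  simp only [Fin.prod_univ_succ, Fin.cons_zero, Fin.cons_succ, Fin.val_zero, Fin.val_succ,
    pow_zero, one_mul, pow_succ, prod_mul_distrib, prod_eq_of_mem_finMulAntidiag ha, mul_comm]

theorem finMulAntidiag_eq_filter_piFinset_Icc {d n : ℕ} (hn : n ≠ 0) :
    finMulAntidiag d n = {a ∈ Fintype.piFinset fun _ : Fin d => Icc 1 n | ∏ i, a i = n} := by
  ext a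
  refine ⟨fun ha => ?_, fun ha => mem_finMulAntidiag.2 ⟨(mem_filter.1 ha).2, hn⟩⟩
  simp only [mem_filter, Fintype.mem_piFinset, mem_Icc]
  exact ⟨fun i => ⟨one_le_iff_ne_zero.2 (ne_zero_of_mem_finMulAntidiag ha i),
    le_of_dvd (pos_of_ne_zero hn) (dvd_of_mem_finMulAntidiag ha i)⟩,
    prod_eq_of_mem_finMulAntidiag ha⟩

end Nat

namespace ArithmeticFunction

open Finset

theorem prod_apply_eq_sum_finMulAntidiag {R : Type*} [CommSemiring R] {d : ℕ}
    (f : Fin d → ArithmeticFunction R) (n : ℕ) :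
    (∏ i, f i) n = ∑ a ∈ Nat.finMulAntidiag d n, ∏ i, f i (a i) := by
  induction d generalizing n with
  | zero =>
    rcases eq_or_ne n 1 with rfl | hn
    · simp [Nat.finMulAntidiag_one]
    · simp [Nat.finMulAntidiag_zero_left hn, hn]
  | succ d ih =>
    rw [Fin.prod_univ_succ, mul_apply, Nat.sum_finMulAntidiag_succ]
    refine sum_congr rfl fun p _ => ?_
    simp [ih, mul_sum, Fin.prod_univ_succ]

theorem prod_range_pow_apply (d n : ℕ) :
    (∏ k ∈ range d, pow k) n = ∑ a ∈ Nat.finMulAntidiag d n, ∏ i : Fin d, a i ^ (i : ℕ) := by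
  rw [← Fin.prod_univ_eq_prod_range, prod_apply_eq_sum_finMulAntidiag]
  refine sum_congr rfl fun a ha => prod_congr rfl fun i _ => ?_
  rw [pow_apply, if_neg fun h => Nat.ne_zero_of_mem_finMulAntidiag ha i h.2]

end ArithmeticFunction

open AddSubgroup AddMonoidHom

theorem AddSubgroup.index_eq_index_comap_inr_mul_index_map_fst {M N : Type*} [AddCommGroup M]
    [AddCommGroup N] (H : AddSubgroup (M × N)) :
    H.index = (H.comap (inr M N)).index * (H.map (fst M N)).index := by
  have hker : (inr M N).range = (fst M N).ker := by
    ext x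
    simp [Prod.ext_iff, eq_comm, mem_prod]
  rw [index_comap, hker, index_map, range_eq_top_of_surjective _ Prod.fst_surjective, index_top,
    mul_one, ← relIndex_sup_right, sup_comm, relIndex_mul_index le_sup_left]

theorem Int.addSubgroup_eq_zmultiples_index (S : AddSubgroup ℤ) :
    S = zmultiples (S.index : ℤ) := by
  obtain ⟨g, rfl⟩ := Int.subgroup_cyclic S
  rw [← zmultiples_eq_closure, Int.index_zmultiples, Int.zmultiples_natAbs]

section Fibres

variable {G : Type*} [AddGroup G] {m : ℕ}

theorem AddSubgroup.finite_sigma_quotient_of_index_eq (hm : m ≠ 0)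
    [Finite {K : AddSubgroup G // K.index = m}] :
    Finite (Σ K : {K : AddSubgroup G // K.index = m}, G ⧸ (K : AddSubgroup G)) :=
  have (K : {K : AddSubgroup G // K.index = m}) : Finite (G ⧸ (K : AddSubgroup G)) :=
    Nat.finite_of_card_ne_zero (by rw [← index_eq_card, K.2]; exact hm)
  inferInstance

theorem AddSubgroup.card_sigma_quotient_of_index_eq (hm : m ≠ 0)
    [Finite {K : AddSubgroup G // K.index = m}] :
    Nat.card (Σ K : {K : AddSubgroup G // K.index = m}, G ⧸ (K : AddSubgroup G)) =
      m * Nat.card {K : AddSubgroup G // K.index = m} := by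
  have : Fintype {K : AddSubgroup G // K.index = m} := .ofFinite _
  have (K : {K : AddSubgroup G // K.index = m}) : Finite (G ⧸ (K : AddSubgroup G)) :=
    Nat.finite_of_card_ne_zero (by rw [← index_eq_card, K.2]; exact hm)
  rw [Nat.card_sigma, Fintype.sum_congr _ (fun _ => m) fun K => (index_eq_card _).symm.trans K.2,
    Finset.sum_const, Finset.card_univ, smul_eq_mul, Nat.card_eq_fintype_card, mul_comm]

end Fibres

section CyclicExtension

variable {N : Type*} [AddCommGroup N] {K : AddSubgroup N} {a : ℤ} {v w : N}

def cyclicExtension (K : AddSubgroup N) (a : ℤ) (v : N) : AddSubgroup (ℤ × N) :=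
  K.map (inr ℤ N) ⊔ zmultiples (a, v)

theorem mem_cyclicExtension {x : ℤ × N} :
    x ∈ cyclicExtension K a v ↔ ∃ t : ℤ, x.1 = t * a ∧ x.2 - t • v ∈ K := by
  rw [cyclicExtension, mem_sup]
  constructor
  · rintro ⟨_, ⟨k, hk, rfl⟩, _, ⟨t, rfl⟩, rfl⟩
    exact ⟨t, by simp, by simpa using hk⟩
  · rintro ⟨t, h1, h2⟩
    refine ⟨_, mem_map_of_mem _ h2, t • (a, v), zsmul_mem_zmultiples _ _, ?_⟩
    ext <;> simp [h1]

theorem map_fst_cyclicExtension : (cyclicExtension K a v).map (fst ℤ N) = zmultiples a := by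
  ext x
  simp only [mem_map, mem_cyclicExtension, Int.mem_zmultiples_iff, coe_fst]
  constructor
  · rintro ⟨y, ⟨t, h1, -⟩, rfl⟩
    exact ⟨t, by rw [h1, mul_comm]⟩
  · rintro ⟨t, rfl⟩
    exact ⟨(a * t, t • v), ⟨t, mul_comm a t, by simp⟩, rfl⟩

theorem comap_inr_cyclicExtension (ha : a ≠ 0) : (cyclicExtension K a v).comap (inr ℤ N) = K := by
  ext x
  simp [mem_cyclicExtension, ha, eq_comm (a := (0 : ℤ))]

theorem cyclicExtension_eq_cyclicExtension_iff (ha : a ≠ 0) :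
    cyclicExtension K a w = cyclicExtension K a v ↔ w - v ∈ K := by
  refine ⟨fun h => ?_, fun h => ?_⟩
  · have hw : (a, w) ∈ cyclicExtension K a v := h ▸ mem_cyclicExtension.2 ⟨1, by simp, by simp⟩
    obtain ⟨t, ht, hK⟩ := mem_cyclicExtension.1 hw
    obtain rfl : t = 1 := by simpa [ha] using ht
    simpa using hK
  · ext x
    simp only [mem_cyclicExtension]
    refine exists_congr fun t => and_congr_right fun _ => ?_
    have : x.2 - t • v = x.2 - t • w + t • (w - v) := by rw [smul_sub]; abel
    rw [this, add_mem_cancel_right (zsmul_mem h t)]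

theorem eq_cyclicExtension {H : AddSubgroup (ℤ × N)} (hH : H.map (fst ℤ N) = zmultiples a)
    (hv : (a, v) ∈ H) : H = cyclicExtension (H.comap (inr ℤ N)) a v := by
  ext x
  rw [mem_cyclicExtension]
  constructor
  · intro hx
    obtain ⟨t, ht⟩ := mem_zmultiples_iff.1 (hH ▸ mem_map_of_mem (fst ℤ N) hx)
    replace ht : x.1 = t * a := by simpa using ht.symm
    refine ⟨t, ht, ?_⟩
    have : inr ℤ N (x.2 - t • v) = x - t • (a, v) := by
      ext <;> simp [ht]
    rw [mem_comap, this]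
    exact sub_mem hx (zsmul_mem hv t)
  · rintro ⟨t, h1, h2⟩
    have : x = inr ℤ N (x.2 - t • v) + t • (a, v) := by
      ext <;> simp [h1]
    rw [this]
    exact add_mem h2 (zsmul_mem hv t)

theorem index_cyclicExtension (ha : a ≠ 0) :
    (cyclicExtension K a v).index = K.index * a.natAbs := by
  rw [index_eq_index_comap_inr_mul_index_map_fst, comap_inr_cyclicExtension ha,
    map_fst_cyclicExtension, Int.index_zmultiples]

end CyclicExtension

section Counting

variable {N : Type*} [AddCommGroup N] {n : ℕ}

/-- `p = (a, m)` records the index `a` of the image in `ℤ` and the index `m` of `K`. -/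
abbrev CyclicExtensionData (N : Type*) [AddCommGroup N] (n : ℕ) :=
  Σ p : n.divisorsAntidiagonal, Σ K : {K : AddSubgroup N // K.index = p.1.2},
    N ⧸ (K : AddSubgroup N)

noncomputable def CyclicExtensionData.toSubgroup (q : CyclicExtensionData N n) :
    {H : AddSubgroup (ℤ × N) // H.index = n} :=
  ⟨cyclicExtension q.2.1 q.1.1.1 q.2.2.out, by
    rw [index_cyclicExtension (mod_cast Nat.left_ne_zero_of_mem_divisorsAntidiagonal q.1.2),
      q.2.1.2, Int.natAbs_natCast, mul_comm, (Nat.mem_divisorsAntidiagonal.1 q.1.2).1]⟩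

theorem CyclicExtensionData.toSubgroup_injective :
    Function.Injective (CyclicExtensionData.toSubgroup (N := N) (n := n)) := by
  rintro ⟨⟨⟨a, m⟩, hp⟩, ⟨K, hK⟩, w⟩ ⟨⟨⟨a', m'⟩, hp'⟩, ⟨K', hK'⟩, w'⟩ h
  replace h : cyclicExtension K a w.out = cyclicExtension K' a' w'.out := congrArg Subtype.val h
  have ha : (a : ℤ) ≠ 0 := mod_cast Nat.left_ne_zero_of_mem_divisorsAntidiagonal hp
  obtain rfl : a = a' := by
    simpa [map_fst_cyclicExtension, Int.index_zmultiples] using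
      congrArg (fun H => (H.map (fst ℤ N)).index) h
  obtain rfl : K = K' := by
    simpa [comap_inr_cyclicExtension ha] using congrArg (comap (inr ℤ N)) h
  obtain rfl : m = m' := hK.symm.trans hK'
  obtain rfl : w = w' := by
    rw [cyclicExtension_eq_cyclicExtension_iff ha, ← QuotientAddGroup.eq_iff_sub_mem,
      QuotientAddGroup.out_eq', QuotientAddGroup.out_eq'] at h
    exact h
  rfl

theorem CyclicExtensionData.toSubgroup_surjective (hn : n ≠ 0) :
    Function.Surjective (CyclicExtensionData.toSubgroup (N := N) (n := n)) := by
  rintro ⟨H, hH⟩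
  set K := H.comap (inr ℤ N)
  set S := H.map (fst ℤ N)
  have hidx : S.index * K.index = n := by
    rw [← hH, index_eq_index_comap_inr_mul_index_map_fst, mul_comm]
  have hS : S = zmultiples (S.index : ℤ) := Int.addSubgroup_eq_zmultiples_index S
  obtain ⟨x, hx, hx1⟩ : (S.index : ℤ) ∈ S := (SetLike.ext_iff.1 hS _).2 (mem_zmultiples _)
  have hv : ((S.index : ℤ), x.2) ∈ H := by rw [← hx1]; exact hx
  refine ⟨⟨⟨(S.index, K.index), Nat.mem_divisorsAntidiagonal.2 ⟨hidx, hn⟩⟩, ⟨K, rfl⟩, x.2⟩,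
    Subtype.ext ?_⟩
  have ha : (S.index : ℤ) ≠ 0 := mod_cast left_ne_zero_of_mul (hidx ▸ hn)
  have hw : (QuotientAddGroup.mk x.2 : N ⧸ K).out - x.2 ∈ K := by
    rw [← QuotientAddGroup.eq_iff_sub_mem, QuotientAddGroup.out_eq']
  exact ((cyclicExtension_eq_cyclicExtension_iff ha).2 hw).trans (eq_cyclicExtension hS hv).symm

noncomputable def cyclicExtensionEquiv (hn : n ≠ 0) :
    CyclicExtensionData N n ≃ {H : AddSubgroup (ℤ × N) // H.index = n} :=
  .ofBijective _
    ⟨CyclicExtensionData.toSubgroup_injective, CyclicExtensionData.toSubgroup_surjective hn⟩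

theorem CyclicExtensionData.finite_fibre
    (hfin : ∀ m ≠ 0, Finite {K : AddSubgroup N // K.index = m}) (p : n.divisorsAntidiagonal) :
    Finite (Σ K : {K : AddSubgroup N // K.index = p.1.2}, N ⧸ (K : AddSubgroup N)) :=
  have := hfin _ (Nat.right_ne_zero_of_mem_divisorsAntidiagonal p.2)
  finite_sigma_quotient_of_index_eq (Nat.right_ne_zero_of_mem_divisorsAntidiagonal p.2)

theorem finite_subgroups_index_eq_int_prod
    (hfin : ∀ m ≠ 0, Finite {K : AddSubgroup N // K.index = m}) (hn : n ≠ 0) :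
    Finite {H : AddSubgroup (ℤ × N) // H.index = n} := by
  have := CyclicExtensionData.finite_fibre (n := n) hfin
  exact .of_equiv _ (cyclicExtensionEquiv hn)

theorem card_subgroups_index_eq_int_prod
    (hfin : ∀ m ≠ 0, Finite {K : AddSubgroup N // K.index = m}) (hn : n ≠ 0) :
    Nat.card {H : AddSubgroup (ℤ × N) // H.index = n} =
      ∑ p ∈ n.divisorsAntidiagonal, p.2 * Nat.card {K : AddSubgroup N // K.index = p.2} := by
  have := CyclicExtensionData.finite_fibre (n := n) hfin
  rw [← Nat.card_congr (cyclicExtensionEquiv hn), Nat.card_sigma,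
    ← Finset.sum_coe_sort n.divisorsAntidiagonal]
  exact Fintype.sum_congr _ _ fun p =>
    have := hfin _ (Nat.right_ne_zero_of_mem_divisorsAntidiagonal p.2)
    card_sigma_quotient_of_index_eq (Nat.right_ne_zero_of_mem_divisorsAntidiagonal p.2)

end Counting

def AddEquiv.subgroupsIndexEqCongr {G G' : Type*} [AddGroup G] [AddGroup G'] (e : G ≃+ G')
    (n : ℕ) : {H : AddSubgroup G // H.index = n} ≃ {H : AddSubgroup G' // H.index = n} :=
  e.mapAddSubgroup.toEquiv.subtypeEquiv fun H => by simp [AddEquiv.mapAddSubgroup, index_map_equiv]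

def finConsAddEquiv (d : ℕ) : ℤ × (Fin d → ℤ) ≃+ (Fin (d + 1) → ℤ) :=
  (Fin.consLinearEquiv ℤ fun _ : Fin (d + 1) => ℤ).toAddEquiv

theorem finite_subgroups_index_eq_pi_int (d : ℕ) {n : ℕ} (hn : n ≠ 0) :
    Finite {H : AddSubgroup (Fin d → ℤ) // H.index = n} := by
  induction d generalizing n with
  | zero => infer_instance
  | succ d ih =>
    have := finite_subgroups_index_eq_int_prod (fun m hm => ih hm) hn
    exact .of_equiv _ ((finConsAddEquiv d).subgroupsIndexEqCongr n)

theorem card_subgroups_index_eq_pi_int (d : ℕ) {n : ℕ} (hn : n ≠ 0) :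
    Nat.card {H : AddSubgroup (Fin d → ℤ) // H.index = n} =
      ∑ a ∈ Nat.finMulAntidiag d n, ∏ i : Fin d, a i ^ (i : ℕ) := by
  induction d generalizing n with
  | zero =>
    rcases eq_or_ne n 1 with rfl | h1
    · simp [index_eq_one, Nat.finMulAntidiag_one]
    · simp [Subsingleton.elim _ (⊤ : AddSubgroup (Fin 0 → ℤ)), Ne.symm h1,
        Nat.finMulAntidiag_zero_left h1]
  | succ d ih =>
    rw [← Nat.card_congr ((finConsAddEquiv d).subgroupsIndexEqCongr n),
      card_subgroups_index_eq_int_prod (fun m hm => finite_subgroups_index_eq_pi_int d hm) hn,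
      Nat.sum_finMulAntidiag_prod_pow_succ]
    exact Finset.sum_congr rfl fun p hp => by
      rw [ih (Nat.right_ne_zero_of_mem_divisorsAntidiagonal hp)]

open ArithmeticFunction in
theorem stmt1_general (d : ℕ) (n : ℕ) (hn : 0 < n) :
    (Nat.card {H : AddSubgroup (Fin d → ℤ) // H.index = n} =
      ∑ a ∈ Finset.filter (fun a : Fin d → ℕ => ∏ i, a i = n)
          (Fintype.piFinset fun _ : Fin d => Finset.Icc 1 n),
        ∏ i : Fin d, (a i) ^ (i : ℕ)) ∧
    Nat.card {H : AddSubgroup (Fin d → ℤ) // H.index = n} =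
      (∏ k ∈ Finset.range d, ArithmeticFunction.pow k) n := by
  rw [card_subgroups_index_eq_pi_int d hn.ne']
  exact ⟨by rw [Nat.finMulAntidiag_eq_filter_piFinset_Icc hn.ne'], (prod_range_pow_apply d n).symm⟩

open ArithmeticFunction in
/-- The number of index-`n` subgroups of `ℤ^d` equals the sum over factorizations
`a₁ ⋯ a_d = n` of `∏ aᵢ^(i-1)`; equivalently it is the `d`-fold Dirichlet
convolution of the power functions `Id⁰ * Id¹ * ⋯ * Id^(d-1)`. -/
theorem stmt1 (d : ℕ) (hd : 1 ≤ d) (n : ℕ) (hn : 0 < n) :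
    (Nat.card {H : AddSubgroup (Fin d → ℤ) // H.index = n} =
      ∑ a ∈ Finset.filter (fun a : Fin d → ℕ => ∏ i, a i = n)
          (Fintype.piFinset fun _ : Fin d => Finset.Icc 1 n),
        ∏ i : Fin d, (a i) ^ (i : ℕ)) ∧
    Nat.card {H : AddSubgroup (Fin d → ℤ) // H.index = n} =
      (∏ k ∈ Finset.range d, ArithmeticFunction.pow k) n :=
  stmt1_general d n hn
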